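/- arXiv:1312.2202 — 5 statements merged into one kernel-verified Lean document; each statement's English description precedes it below -/
import Mathlib

section
/- Let V be a finite-dimensional real vector space, Φ a bilinear alternating form on V, θ, ψ ∈ V* linearly independent with a decomposition V = span{t, σ} ⊕ Q where θ(t)=1, θ(σ)=0, ψ(σ)=1, ψ(t)=0 and Q = ker θ ∩ ker ψ. If Ω := -θ∧ψ + Φ with Φ(σ, v) = 0 for all v ∈ V and Ω is nondegenerate on V, then Φ restricted to Q is nondegenerate. -/
/-!
For `q ∈ Q` with `Φ(q, Q) = 0`, alternation and `Φ(σ, ·) = 0` give `Φ(q, v) = θ(v) Φ(q, t)`.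
With `c := Φ(q, t)`, the vector `u := q - c σ` then satisfies
`Ω(u, v) = -c θ(v) + c θ(v) = 0` for every `v`, so `u = 0` by nondegeneracy of `Ω`.
Applying `ψ` gives `c = 0`, hence `q = u = 0`.
-/

section

variable {R V : Type*} [CommRing R] [AddCommGroup V] [Module R V]

theorem LinearMap.IsAlt.apply_eq_dual_mul_of_isOrtho_ker
    {Φ : V →ₗ[R] V →ₗ[R] R} (hΦalt : Φ.IsAlt) {θ ψ : Module.Dual R V} {t σ q : V}
    (hθt : θ t = 1) (hθσ : θ σ = 0) (hΦσ : ∀ v : V, Φ σ v = 0)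
    (hdecomp : ∀ v : V, ∃ (a b : R) (q : V), θ q = 0 ∧ ψ q = 0 ∧ v = a • t + b • σ + q)
    (hq : ∀ q' : V, θ q' = 0 → ψ q' = 0 → Φ q q' = 0) (v : V) :
    Φ q v = θ v * Φ q t := by
  obtain ⟨a, b, q', hθq', hψq', rfl⟩ := hdecomp v
  have hΦqσ : Φ q σ = 0 := hΦalt.eq_iff.mp (hΦσ q)
  simp only [map_add, map_smul, smul_eq_mul, hθt, hθσ, hθq', hΦqσ, hq q' hθq' hψq']
  ring

end

theorem restricted_form_nondegenerate_general
    (V : Type) [AddCommGroup V] [Module ℝ V]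
    (Φ : V →ₗ[ℝ] V →ₗ[ℝ] ℝ) (hΦalt : ∀ v : V, Φ v v = 0)
    (θ ψ : Module.Dual ℝ V)
    (t σ : V)
    (hθt : θ t = 1) (hθσ : θ σ = 0) (hψσ : ψ σ = 1)
    (hdecomp : ∀ v : V, ∃ (a b : ℝ) (q : V), θ q = 0 ∧ ψ q = 0 ∧
      v = a • t + b • σ + q)
    (hΦσ : ∀ v : V, Φ σ v = 0)
    (hΩnd : ∀ u : V, (∀ v : V, -(θ u * ψ v - θ v * ψ u) + Φ u v = 0) → u = 0) :
    ∀ q : V, θ q = 0 → ψ q = 0 →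
      (∀ q' : V, θ q' = 0 → ψ q' = 0 → Φ q q' = 0) → q = 0 := by
  intro q hθq hψq hq
  have hΦq := LinearMap.IsAlt.apply_eq_dual_mul_of_isOrtho_ker hΦalt hθt hθσ hΦσ hdecomp hq
  have hu : q - Φ q t • σ = 0 := hΩnd _ fun v ↦ by
    simp only [map_sub, map_smul, LinearMap.sub_apply, LinearMap.smul_apply, smul_eq_mul,
      hθq, hψq, hθσ, hψσ, hΦσ]
    rw [hΦq v]
    ring
  have hc : Φ q t = 0 := by simpa [hψq, hψσ] using congrArg ψ hu
  simpa [hc] using hu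

/-- If Ω = -θ∧ψ + Φ is nondegenerate on V = span{t,σ} ⊕ (ker θ ∩ ker ψ), with
Φ alternating and Φ(σ,·) = 0, then Φ restricted to Q = ker θ ∩ ker ψ is
nondegenerate. -/
theorem restricted_form_nondegenerate
    (V : Type) [AddCommGroup V] [Module ℝ V] [FiniteDimensional ℝ V]
    (Φ : V →ₗ[ℝ] V →ₗ[ℝ] ℝ) (hΦalt : ∀ v : V, Φ v v = 0)
    (θ ψ : Module.Dual ℝ V) (hindep : LinearIndependent ℝ ![θ, ψ])
    (t σ : V)
    (hθt : θ t = 1) (hθσ : θ σ = 0) (hψσ : ψ σ = 1) (hψt : ψ t = 0)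
    (hdecomp : ∀ v : V, ∃ (a b : ℝ) (q : V), θ q = 0 ∧ ψ q = 0 ∧
      v = a • t + b • σ + q)
    (hΦσ : ∀ v : V, Φ σ v = 0)
    (hΩnd : ∀ u : V, (∀ v : V, -(θ u * ψ v - θ v * ψ u) + Φ u v = 0) → u = 0) :
    ∀ q : V, θ q = 0 → ψ q = 0 →
      (∀ q' : V, θ q' = 0 → ψ q' = 0 → Φ q q' = 0) → q = 0 :=
  restricted_form_nondegenerate_general V Φ hΦalt θ ψ t σ hθt hθσ hψσ hdecomp hΦσ hΩnd
end

section
/- Let 𝔤 = ℝT ⊕ 𝔰𝔲(2) with basis {T,X,Y,Z}, where T is central and [X,Y]=Z, [Y,Z]=X, [Z,X]=Y. For c ≠ 0 and d real, the endomorphism J defined by J(T - dX) = cX, J(cX) = -(T - dX), J(Y) = Z, J(Z) = -Y satisfies J² = -Id, and its Nijenhuis tensor vanishes: [JU,JV] - [U,V] - J[JU,V] - J[U,JV] = 0 for all U,V ∈ 𝔤. -/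
/-- On 𝔤 = ℝT ⊕ 𝔰𝔲(2) (basis T,X,Y,Z; T central; [X,Y]=Z, [Y,Z]=X, [Z,X]=Y),
for c ≠ 0 the endomorphism J with J(T - dX) = cX, J(cX) = -(T - dX), JY = Z,
JZ = -Y satisfies J² = -Id and has vanishing Nijenhuis tensor. -/
theorem u2_complex_structure_integrable
    (L : Type) [LieRing L] [LieAlgebra ℝ L] (b : Module.Basis (Fin 4) ℝ L)
    (hT : ∀ U : L, ⁅b 0, U⁆ = 0)
    (hXY : ⁅b 1, b 2⁆ = b 3) (hYZ : ⁅b 2, b 3⁆ = b 1) (hZX : ⁅b 3, b 1⁆ = b 2)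
    (c d : ℝ) (hc : c ≠ 0)
    (J : L →ₗ[ℝ] L)
    (hJ1 : J (b 0 - d • b 1) = c • b 1)
    (hJ2 : J (c • b 1) = -(b 0 - d • b 1))
    (hJ3 : J (b 2) = b 3) (hJ4 : J (b 3) = -b 2) :
    (∀ U : L, J (J U) = -U) ∧
    (∀ U V : L, ⁅J U, J V⁆ - ⁅U, V⁆ - J ⁅J U, V⁆ - J ⁅U, J V⁆ = 0) := by
  have hT' : ∀ U : L, ⁅U, b 0⁆ = 0 := fun U => by
    rw [← lie_skew, hT]; simp
  -- J on b 1
  have hb1 : J (b 1) = c⁻¹ • (d • b 1 - b 0) := by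
    have h : c • J (b 1) = -(b 0 - d • b 1) := by rw [← map_smul]; exact hJ2
    have h' := congrArg (fun v => c⁻¹ • v) h
    simp only [smul_smul, inv_mul_cancel₀ hc, one_smul] at h'
    rw [h']; module
  -- J on b 0
  have hb0 : J (b 0) = c • b 1 + d • (c⁻¹ • (d • b 1 - b 0)) := by
    have h : J (b 0) - d • J (b 1) = c • b 1 := by
      rw [← map_smul, ← map_sub]; exact hJ1
    have := congrArg (fun v => v + d • J (b 1)) h
    simp only [sub_add_cancel] at this
    rw [this, hb1]
  have key : ∀ i j : Fin 4,
      ⁅J (b i), J (b j)⁆ - ⁅b i, b j⁆ - J ⁅J (b i), b j⁆ - J ⁅b i, J (b j)⁆ = 0 := by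
    have hYX : ⁅b 2, b 1⁆ = -(b 3) := by rw [← lie_skew, hXY]
    have hZY : ⁅b 3, b 2⁆ = -(b 1) := by rw [← lie_skew, hYZ]
    have hXZ : ⁅b 1, b 3⁆ = -(b 2) := by rw [← lie_skew, hZX]
    have e0 : (⟨0, by norm_num⟩ : Fin 4) = (0 : Fin 4) := rfl
    have e1 : (⟨1, by norm_num⟩ : Fin 4) = (1 : Fin 4) := rfl
    have e2 : (⟨2, by norm_num⟩ : Fin 4) = (2 : Fin 4) := rfl
    have e3 : (⟨3, by norm_num⟩ : Fin 4) = (3 : Fin 4) := rfl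
    intro i j
    fin_cases i <;> fin_cases j <;>
      simp only [e0, e1, e2, e3, Fin.isValue, hb0, hb1, hJ3, hJ4, map_add, map_sub, map_smul, map_neg, map_zero,
        lie_add, add_lie, lie_sub, sub_lie, lie_smul, smul_lie, lie_neg, neg_lie,
        lie_self, hT, hT', hXY, hYZ, hZX, hYX, hZY, hXZ, smul_zero, smul_neg,
        neg_zero, neg_neg, sub_zero, zero_sub, add_zero, zero_add, smul_sub,
        lie_zero, zero_lie] <;>
      match_scalars <;> (try field_simp) <;> (try ring)
  constructor
  · have hsq : J ∘ₗ J = -LinearMap.id := by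
      have e0 : (⟨0, by norm_num⟩ : Fin 4) = (0 : Fin 4) := rfl
      have e1 : (⟨1, by norm_num⟩ : Fin 4) = (1 : Fin 4) := rfl
      have e2 : (⟨2, by norm_num⟩ : Fin 4) = (2 : Fin 4) := rfl
      have e3 : (⟨3, by norm_num⟩ : Fin 4) = (3 : Fin 4) := rfl
      apply b.ext
      intro i
      fin_cases i <;>
        simp only [e0, e1, e2, e3, Fin.isValue, LinearMap.comp_apply, LinearMap.neg_apply, LinearMap.id_apply,
          hb0, hb1, hJ3, hJ4, map_add, map_sub, map_smul, map_neg, map_zero] <;>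
        match_scalars <;> (try field_simp) <;> (try ring)
    intro U
    have := LinearMap.congr_fun hsq U
    simpa using this
  · let B : L →ₗ[ℝ] L →ₗ[ℝ] L := LinearMap.mk₂ ℝ
      (fun U V => ⁅J U, J V⁆ - ⁅U, V⁆ - J ⁅J U, V⁆ - J ⁅U, J V⁆)
      (by intro U U' V; simp only [map_add, add_lie, lie_add]; abel)
      (by intro a U V; simp only [map_smul, smul_lie, lie_smul, smul_sub]; try abel)
      (by intro U V V'; simp only [map_add, add_lie, lie_add]; abel)
      (by intro a U V; simp only [map_smul, smul_lie, lie_smul, smul_sub]; try abel)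
    have hB : B = 0 := by
      apply b.ext
      intro i
      apply b.ext
      intro j
      simpa [B] using key i j
    intro U V
    have := LinearMap.congr_fun (LinearMap.congr_fun hB U) V
    simpa [B] using this
end

section
/- Let 𝔤 = ℝT ⊕ 𝔰𝔲(2) with T central, brackets [X,Y]=Z, [Y,Z]=X, [Z,X]=Y, dual basis t,x,y,z, and c ≠ 0. Set θ = t and φ = (1/c)x. Then the 2-form Ω = -θ∧φ + dφ satisfies dΩ = θ∧Ω (the locally conformally Kähler equation on the Lie algebra). -/
/-!
With `Ω = -θ ∧ φ + dφ`, the Leibniz rule and `d² = 0` give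
`dΩ = -dθ ∧ φ + θ ∧ dφ = θ ∧ Ω - dθ ∧ φ`, since `θ ∧ θ = 0`. So the l.c.K. equation holds for
every 1-form `φ` as soon as `θ` is closed, and `θ = t` is closed because the derived algebra of
`ℝT ⊕ 𝔰𝔲(2)` is `𝔰𝔲(2)`.
-/

theorem lck_equation_of_closed {L R : Type*} [LieRing L] [CommRing R]
    (θ : L → R) (φ : L →+ R) (hθ : ∀ U V : L, θ ⁅U, V⁆ = 0)
    (Ω : L → L → R) (hΩ : ∀ U V : L, Ω U V = -(θ U * φ V - θ V * φ U) + -(φ ⁅U, V⁆))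
    (U V W : L) :
    -(Ω ⁅U, V⁆ W) + Ω ⁅U, W⁆ V - Ω ⁅V, W⁆ U
      = θ U * Ω V W - θ V * Ω U W + θ W * Ω U V := by
  have ddφ : φ ⁅⁅U, V⁆, W⁆ - φ ⁅⁅U, W⁆, V⁆ + φ ⁅⁅V, W⁆, U⁆ = 0 := by
    have jacobi := congrArg φ (lie_jacobi W U V)
    simp only [map_add, map_zero] at jacobi
    rw [← lie_skew ⁅U, V⁆ W, ← lie_skew ⁅U, W⁆ V, ← lie_skew U W, ← lie_skew ⁅V, W⁆ U]
    simp only [lie_neg, neg_neg, map_neg]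
    linear_combination -jacobi
  simp only [hΩ, hθ]
  linear_combination ddφ

theorem LinearMap.map_lie_eq_zero_of_basis {ι R L : Type*} [CommRing R] [LieRing L]
    [LieAlgebra R L] (θ : Module.Dual R L) (b : Module.Basis ι R L)
    (h : ∀ i j, θ ⁅b i, b j⁆ = 0) (U V : L) : θ ⁅U, V⁆ = 0 := by
  have : (LieModule.toEnd R L L : L →ₗ[R] L →ₗ[R] L).compr₂ θ = 0 :=
    LinearMap.ext_basis b b h
  simpa using LinearMap.congr_fun₂ this U V

theorem u2_lck_equation_general
    (L : Type) [LieRing L] [LieAlgebra ℝ L] (b : Module.Basis (Fin 4) ℝ L)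
    (hT : ∀ U : L, ⁅b 0, U⁆ = 0)
    (hXY : ⁅b 1, b 2⁆ = b 3) (hYZ : ⁅b 2, b 3⁆ = b 1) (hZX : ⁅b 3, b 1⁆ = b 2)
    (c : ℝ)
    (θ φ : L → ℝ)
    (hθ : ∀ U : L, θ U = b.coord 0 U)
    (hφ : ∀ U : L, φ U = (1 / c) * b.coord 1 U)
    (Ω : L → L → ℝ)
    (hΩ : ∀ U V : L, Ω U V = -(θ U * φ V - θ V * φ U) + -(φ ⁅U, V⁆)) :
    ∀ U V W : L,
      -(Ω ⁅U, V⁆ W) + Ω ⁅U, W⁆ V - Ω ⁅V, W⁆ U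
        = θ U * Ω V W - θ V * Ω U W + θ W * Ω U V := by
  have hθ_closed : ∀ U V : L, θ ⁅U, V⁆ = 0 := by
    intro U V
    rw [hθ]
    refine LinearMap.map_lie_eq_zero_of_basis _ b (fun i j => ?_) U V
    have hT' (U : L) : ⁅U, b 0⁆ = 0 := by rw [← lie_skew, hT, neg_zero]
    have hYX : ⁅b 2, b 1⁆ = -b 3 := by rw [← lie_skew, hXY]
    have hZY : ⁅b 3, b 2⁆ = -b 1 := by rw [← lie_skew, hYZ]
    have hXZ : ⁅b 1, b 3⁆ = -b 2 := by rw [← lie_skew, hZX]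
    fin_cases i <;> fin_cases j <;>
      simp [hT, hT', hXY, hYZ, hZX, hYX, hZY, hXZ, Module.Basis.coord_apply]
  obtain rfl : φ = ⇑((1 / c) • b.coord 1) := funext hφ
  exact lck_equation_of_closed θ ((1 / c) • b.coord 1).toAddMonoidHom hθ_closed Ω hΩ

/-- On 𝔤 = ℝT ⊕ 𝔰𝔲(2) with θ = t, φ = (1/c)x, the 2-form
Ω = -θ∧φ + dφ satisfies the l.c.K. equation dΩ = θ∧Ω. -/
theorem u2_lck_equation
    (L : Type) [LieRing L] [LieAlgebra ℝ L] (b : Module.Basis (Fin 4) ℝ L)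
    (hT : ∀ U : L, ⁅b 0, U⁆ = 0)
    (hXY : ⁅b 1, b 2⁆ = b 3) (hYZ : ⁅b 2, b 3⁆ = b 1) (hZX : ⁅b 3, b 1⁆ = b 2)
    (c : ℝ) (hc : c ≠ 0)
    (θ φ : L → ℝ)
    (hθ : ∀ U : L, θ U = b.coord 0 U)
    (hφ : ∀ U : L, φ U = (1 / c) * b.coord 1 U)
    (Ω : L → L → ℝ)
    (hΩ : ∀ U V : L, Ω U V = -(θ U * φ V - θ V * φ U) + -(φ ⁅U, V⁆)) :
    ∀ U V W : L,
      -(Ω ⁅U, V⁆ W) + Ω ⁅U, W⁆ V - Ω ⁅V, W⁆ U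
        = θ U * Ω V W - θ V * Ω U W + θ W * Ω U V :=
  u2_lck_equation_general L b hT hXY hYZ hZX c θ φ hθ hφ Ω hΩ
end

section
/- In 𝔤 = ℝT ⊕ 𝔰𝔲(2) with complex structure J_δ (J(T-dX) = cX, J(cX) = -(T-dX), JY = Z, JZ = -Y, c ≠ 0) and any 1-form ψ = a·x + b·y + e·z (a,b,e ∈ ℝ), if the bilinear form h'(U,V) := Ω'(J_δU, V) associated to Ω' = -t∧ψ + dψ is symmetric and positive definite, then b = e = 0 and a·c > 0. -/
/-!
In the basis `T, X, Y, Z` the complex structure reads `JX = c⁻¹ • (dX - T)`, `JY = Z`,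
`JZ = -Y`, and since `T` is central and `t` vanishes on `𝔰𝔲(2)`, the entries of `h'` are
read off from the brackets: `h'(Y, Y) = a` and `h'(X, X) = a / c`, so positivity forces
`a > 0` and `c > 0`. Symmetry in the pairs `(X, Y)` and `(X, Z)` gives `(1 + c) b = d e` and
`(1 + c) e = -d b`, i.e. `(1 + c + i d)(b + i e) = 0` with `1 + c + i d ≠ 0`.
-/

theorem eq_zero_of_mul_eq_of_mul_eq_neg {p q b e : ℝ} (hpq : p ≠ 0 ∨ q ≠ 0)
    (h₁ : p * b = q * e) (h₂ : p * e = -(q * b)) : b = 0 ∧ e = 0 := by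
  have hn : p ^ 2 + q ^ 2 ≠ 0 := by rcases hpq with h | h <;> positivity
  refine ⟨(mul_eq_zero.1 ?_).resolve_left hn, (mul_eq_zero.1 ?_).resolve_left hn⟩
  · linear_combination p * h₁ + q * h₂
  · linear_combination p * h₂ - q * h₁

section LckForm

variable {L : Type*} [LieRing L] [LieAlgebra ℝ L]

/-- `-t ∧ ψ + dψ`, with the convention `dψ(U, V) = -ψ ⁅U, V⁆`. -/
def lckForm (t ψ : Module.Dual ℝ L) (U V : L) : ℝ :=
  -(t U * ψ V - t V * ψ U) + -ψ ⁅U, V⁆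

variable {t ψ : Module.Dual ℝ L}

theorem lckForm_of_apply_eq_zero {U V : L} (hU : t U = 0) (hV : t V = 0) :
    lckForm t ψ U V = -ψ ⁅U, V⁆ := by
  simp [lckForm, hU, hV]

theorem lckForm_smul_sub_central {T X V : L} (hT : ∀ U : L, ⁅T, U⁆ = 0) (htT : t T = 1)
    (htX : t X = 0) (htV : t V = 0) (r d : ℝ) :
    lckForm t ψ (r • (d • X - T)) V = r * (ψ V - d * ψ ⁅X, V⁆) := by
  simp only [lckForm, map_smul, map_sub, smul_lie, sub_lie, hT, map_zero, htT, htX, htV,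
    smul_eq_mul]
  ring

end LckForm

theorem u2_lck_forms_unique_general
    (L : Type) [LieRing L] [LieAlgebra ℝ L] (bs : Module.Basis (Fin 4) ℝ L)
    (hT : ∀ U : L, ⁅bs 0, U⁆ = 0)
    (hXY : ⁅bs 1, bs 2⁆ = bs 3) (hYZ : ⁅bs 2, bs 3⁆ = bs 1)
    (hZX : ⁅bs 3, bs 1⁆ = bs 2)
    (c d : ℝ) (hc : c ≠ 0)
    (J : L →ₗ[ℝ] L)
    (hJ2 : J (c • bs 1) = -(bs 0 - d • bs 1))
    (hJ3 : J (bs 2) = bs 3) (hJ4 : J (bs 3) = -bs 2)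
    (a b e : ℝ)
    (ψ : L → ℝ)
    (hψ : ∀ U : L, ψ U = a * bs.coord 1 U + b * bs.coord 2 U + e * bs.coord 3 U)
    (Ω' : L → L → ℝ)
    (hΩ' : ∀ U V : L, Ω' U V
      = -(bs.coord 0 U * ψ V - bs.coord 0 V * ψ U) + -(ψ ⁅U, V⁆))
    (h' : L → L → ℝ) (hh' : ∀ U V : L, h' U V = Ω' (J U) V)
    (hsym : ∀ U V : L, h' U V = h' V U)
    (hpos : ∀ U : L, U ≠ 0 → 0 < h' U U) :
    b = 0 ∧ e = 0 ∧ 0 < a * c := by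
  set φ : Module.Dual ℝ L := a • bs.coord 1 + b • bs.coord 2 + e • bs.coord 3
  have hh : ∀ U V, h' U V = lckForm (bs.coord 0) φ (J U) V := by
    simp [hh', hΩ', hψ, lckForm, φ]
  have hJX : J (bs 1) = c⁻¹ • (d • bs 1 - bs 0) := by
    rw [← neg_sub, ← hJ2, map_smul, inv_smul_smul₀ hc]
  have h22 : h' (bs 2) (bs 2) = a := by
    rw [hh, hJ3, lckForm_of_apply_eq_zero (by simp) (by simp), ← lie_skew, hYZ]
    simp [φ]
  have h21 : h' (bs 2) (bs 1) = -b := by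
    rw [hh, hJ3, lckForm_of_apply_eq_zero (by simp) (by simp), hZX]
    simp [φ]
  have h31 : h' (bs 3) (bs 1) = -e := by
    rw [hh, hJ4, lckForm_of_apply_eq_zero (by simp) (by simp), neg_lie, ← lie_skew, hXY]
    simp [φ]
  have h11 : h' (bs 1) (bs 1) = a / c := by
    rw [hh, hJX, lckForm_smul_sub_central hT (by simp) (by simp) (by simp), lie_self]
    simp [φ, div_eq_inv_mul]
  have h12 : h' (bs 1) (bs 2) = (b - d * e) / c := by
    rw [hh, hJX, lckForm_smul_sub_central hT (by simp) (by simp) (by simp), hXY]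
    simp [φ, div_eq_inv_mul]
  have h13 : h' (bs 1) (bs 3) = (e + d * b) / c := by
    rw [hh, hJX, lckForm_smul_sub_central hT (by simp) (by simp) (by simp), ← lie_skew, hZX]
    simp [φ, div_eq_inv_mul]
  have ha : 0 < a := h22 ▸ hpos _ (bs.ne_zero 2)
  have hc_pos : 0 < c := (div_pos_iff_of_pos_left ha).1 (h11 ▸ hpos _ (bs.ne_zero 1))
  have hb : (1 + c) * b = d * e := by
    linarith [(div_eq_iff hc).1 (h12 ▸ h21 ▸ hsym (bs 1) (bs 2))]
  have he : (1 + c) * e = -(d * b) := by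
    linarith [(div_eq_iff hc).1 (h13 ▸ h31 ▸ hsym (bs 1) (bs 3))]
  obtain ⟨rfl, rfl⟩ := eq_zero_of_mul_eq_of_mul_eq_neg (.inl (by positivity)) hb he
  exact ⟨rfl, rfl, mul_pos ha hc_pos⟩

/-- On 𝔤 = ℝT ⊕ 𝔰𝔲(2) with complex structure J_δ (c ≠ 0), if the bilinear form
h'(U,V) = Ω'(J_δU,V) associated to Ω' = -t∧ψ + dψ with ψ = a·x + b·y + e·z is
symmetric and positive definite, then b = e = 0 and a·c > 0. -/
theorem u2_lck_forms_unique
    (L : Type) [LieRing L] [LieAlgebra ℝ L] (bs : Module.Basis (Fin 4) ℝ L)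
    (hT : ∀ U : L, ⁅bs 0, U⁆ = 0)
    (hXY : ⁅bs 1, bs 2⁆ = bs 3) (hYZ : ⁅bs 2, bs 3⁆ = bs 1)
    (hZX : ⁅bs 3, bs 1⁆ = bs 2)
    (c d : ℝ) (hc : c ≠ 0)
    (J : L →ₗ[ℝ] L)
    (hJ1 : J (bs 0 - d • bs 1) = c • bs 1)
    (hJ2 : J (c • bs 1) = -(bs 0 - d • bs 1))
    (hJ3 : J (bs 2) = bs 3) (hJ4 : J (bs 3) = -bs 2)
    (a b e : ℝ)
    (ψ : L → ℝ)
    (hψ : ∀ U : L, ψ U = a * bs.coord 1 U + b * bs.coord 2 U + e * bs.coord 3 U)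
    (Ω' : L → L → ℝ)
    (hΩ' : ∀ U V : L, Ω' U V
      = -(bs.coord 0 U * ψ V - bs.coord 0 V * ψ U) + -(ψ ⁅U, V⁆))
    (h' : L → L → ℝ) (hh' : ∀ U V : L, h' U V = Ω' (J U) V)
    (hsym : ∀ U V : L, h' U V = h' V U)
    (hpos : ∀ U : L, U ≠ 0 → 0 < h' U U) :
    b = 0 ∧ e = 0 ∧ 0 < a * c :=
  u2_lck_forms_unique_general L bs hT hXY hYZ hZX c d hc J hJ2 hJ3 hJ4 a b e ψ hψ Ω' hΩ' h' hh' hsym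
    hpos
end

section
/- Let 𝔤 = ℝW ⊕ 𝔰𝔩(2,ℝ) with W central and [X,Y] = -Z, [Z,X] = Y, [Z,Y] = -X, dual basis w,x,y,z, and J as: JY = X, JX = -Y, JW = Z, JZ = -W. The 2-form Ω = z∧w + x∧y satisfies dΩ = w∧Ω, i.e. Ω is an l.c.K. form on 𝔤 with Lee form θ = w. -/
/-! Since `W` is central, brackets in `𝔤` only see the `𝔰𝔩(2)` coordinates and have no
`W`-component; writing both sides in coordinates turns `dΩ = w ∧ Ω` into a polynomial identity. -/

theorem Module.Basis.lie_eq_sum {R L ι : Type*} [CommRing R] [LieRing L] [LieAlgebra R L]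
    [Fintype ι] (b : Module.Basis ι R L) (U V : L) :
    ⁅U, V⁆ = ∑ i, ∑ j, (b.repr U i * b.repr V j) • ⁅b i, b j⁆ := by
  conv_lhs => rw [← b.sum_repr U, ← b.sum_repr V]
  simp only [sum_lie, lie_sum, smul_lie, lie_smul, mul_smul]
  rw [Finset.sum_comm]
  simp only [Finset.smul_sum, smul_comm (b.repr V _)]

section CentralExtensionSl2

variable {R L : Type*} [CommRing R] [LieRing L] [LieAlgebra R L] (bs : Module.Basis (Fin 4) R L)

theorem lie_eq_of_basis (hW : ∀ U : L, ⁅bs 0, U⁆ = 0)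
    (hXY : ⁅bs 1, bs 2⁆ = -bs 3) (hZX : ⁅bs 3, bs 1⁆ = bs 2) (hZY : ⁅bs 3, bs 2⁆ = -bs 1)
    (U V : L) :
    ⁅U, V⁆ = (bs.repr U 2 * bs.repr V 3 - bs.repr U 3 * bs.repr V 2) • bs 1
      + (bs.repr U 3 * bs.repr V 1 - bs.repr U 1 * bs.repr V 3) • bs 2
      + (bs.repr U 2 * bs.repr V 1 - bs.repr U 1 * bs.repr V 2) • bs 3 := by
  have hW' : ∀ U : L, ⁅U, bs 0⁆ = 0 := fun U => by rw [← lie_skew, hW, neg_zero]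
  have hYX : ⁅bs 2, bs 1⁆ = bs 3 := by rw [← lie_skew, hXY, neg_neg]
  have hXZ : ⁅bs 1, bs 3⁆ = -bs 2 := by rw [← lie_skew, hZX]
  have hYZ : ⁅bs 2, bs 3⁆ = bs 1 := by rw [← lie_skew, hZY, neg_neg]
  rw [bs.lie_eq_sum]
  simp only [Fin.sum_univ_four, lie_self, hW, hW', hXY, hZX, hZY, hYX, hXZ, hYZ, smul_zero,
    smul_neg]
  module

theorem repr_lie_of_basis (hW : ∀ U : L, ⁅bs 0, U⁆ = 0)
    (hXY : ⁅bs 1, bs 2⁆ = -bs 3) (hZX : ⁅bs 3, bs 1⁆ = bs 2) (hZY : ⁅bs 3, bs 2⁆ = -bs 1)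
    (U V : L) :
    bs.repr ⁅U, V⁆ = Finsupp.single 1 (bs.repr U 2 * bs.repr V 3 - bs.repr U 3 * bs.repr V 2)
      + Finsupp.single 2 (bs.repr U 3 * bs.repr V 1 - bs.repr U 1 * bs.repr V 3)
      + Finsupp.single 3 (bs.repr U 2 * bs.repr V 1 - bs.repr U 1 * bs.repr V 2) := by
  simp [lie_eq_of_basis bs hW hXY hZX hZY]

end CentralExtensionSl2

/-- On 𝔤 = ℝW ⊕ 𝔰𝔩(2,ℝ) with dual basis w,x,y,z, the 2-form
Ω = z∧w + x∧y satisfies dΩ = w∧Ω, i.e. Ω is an l.c.K. form with Lee form w. -/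
theorem sl2_lck_equation
    (L : Type) [LieRing L] [LieAlgebra ℝ L] (bs : Module.Basis (Fin 4) ℝ L)
    (hW : ∀ U : L, ⁅bs 0, U⁆ = 0)
    (hXY : ⁅bs 1, bs 2⁆ = -bs 3) (hZX : ⁅bs 3, bs 1⁆ = bs 2)
    (hZY : ⁅bs 3, bs 2⁆ = -bs 1)
    (Ω : L → L → ℝ)
    (hΩ : ∀ U V : L, Ω U V
      = (bs.coord 3 U * bs.coord 0 V - bs.coord 3 V * bs.coord 0 U)
        + (bs.coord 1 U * bs.coord 2 V - bs.coord 1 V * bs.coord 2 U)) :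
    ∀ U V W : L,
      -(Ω ⁅U, V⁆ W) + Ω ⁅U, W⁆ V - Ω ⁅V, W⁆ U
        = bs.coord 0 U * Ω V W - bs.coord 0 V * Ω U W + bs.coord 0 W * Ω U V := by
  intro U V W
  simp only [hΩ, Module.Basis.coord_apply, repr_lie_of_basis bs hW hXY hZX hZY,
    Finsupp.add_apply, Finsupp.single_apply, Fin.isValue, Fin.reduceEq, ↓reduceIte, add_zero,
    zero_add]
  ring
end
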